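/- arXiv:1801.05105 — 3 statements merged into one kernel-verified Lean document; each statement's English description precedes it below -/
import Mathlib

section
/- Let x : [0,T] → ℝ² be a C² unit-speed curve with ‖x″(t)‖ ≤ B for all t. Then ‖x(T) − x(0)‖ ≥ T − B²T³/6. -/
open Set

theorem stmt2 (T B : ℝ) (hT : 0 ≤ T) (hB : 0 < B)
    (x x' x'' : ℝ → EuclideanSpace ℝ (Fin 2))
    (hderiv : ∀ t ∈ Icc 0 T, HasDerivWithinAt x (x' t) (Icc 0 T) t)
    (hderiv' : ∀ t ∈ Icc 0 T, HasDerivWithinAt x' (x'' t) (Icc 0 T) t)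
    (hcont : ContinuousOn x'' (Icc 0 T))
    (hunit : ∀ t ∈ Icc 0 T, ‖x' t‖ = 1)
    (hbound : ∀ t ∈ Icc 0 T, ‖x'' t‖ ≤ B) :
    ‖x T - x 0‖ ≥ T - B ^ 2 * T ^ 3 / 6 := by
  have h0 : (0 : ℝ) ∈ Icc 0 T := ⟨le_refl 0, hT⟩
  have hTmem : T ∈ Icc (0:ℝ) T := ⟨hT, le_refl T⟩
  set v := x' 0 with hv
  -- ‖x' t - v‖ ≤ B * t on Icc 0 T
  have hlip : ∀ t ∈ Icc (0:ℝ) T, ‖x' t - v‖ ≤ B * t := by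
    intro t ht
    have := Convex.norm_image_sub_le_of_norm_hasDerivWithin_le hderiv' hbound
      (convex_Icc 0 T) h0 ht
    simpa [abs_of_nonneg ht.1] using this
  -- inner bound : ⟪x' t, v⟫ ≥ 1 - B^2 t^2 / 2
  have hinner : ∀ t ∈ Icc (0:ℝ) T, 1 - B ^ 2 * t ^ 2 / 2 ≤ inner ℝ (x' t) v := by
    intro t ht
    have h1 : ‖x' t - v‖ ^ 2 ≤ (B * t) ^ 2 := by
      have := hlip t ht
      have hnn : (0:ℝ) ≤ ‖x' t - v‖ := norm_nonneg _
      nlinarith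
    have h2 : ‖x' t - v‖ ^ 2 = ‖x' t‖ ^ 2 - 2 * inner ℝ (x' t) v + ‖v‖ ^ 2 :=
      norm_sub_sq_real (x' t) v
    have hu1 : ‖x' t‖ = 1 := hunit t ht
    have hu2 : ‖v‖ = 1 := hunit 0 h0
    rw [hu1, hu2] at h2
    nlinarith
  -- define f and show monotone
  set f : ℝ → ℝ := fun t => inner ℝ (x t) v - (t - B ^ 2 * t ^ 3 / 6) with hf
  have hfderiv : ∀ t ∈ Icc (0:ℝ) T,
      HasDerivWithinAt f ((inner ℝ (x' t) v : ℝ) - (1 - B ^ 2 * t ^ 2 / 2)) (Icc 0 T) t := by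
    intro t ht
    have h1 : HasDerivWithinAt (fun t => (inner ℝ (x t) v : ℝ))
        (inner ℝ (x t) (0 : EuclideanSpace ℝ (Fin 2)) + inner ℝ (x' t) v) (Icc 0 T) t :=
      HasDerivWithinAt.inner ℝ (hderiv t ht) (hasDerivWithinAt_const t _ v)
    have h1' : HasDerivWithinAt (fun t => (inner ℝ (x t) v : ℝ))
        (inner ℝ (x' t) v) (Icc 0 T) t := by simpa using h1
    have h2 : HasDerivWithinAt (fun t : ℝ => t - B ^ 2 * t ^ 3 / 6)
        (1 - B ^ 2 * t ^ 2 / 2) (Icc 0 T) t := by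
      have : HasDerivAt (fun t : ℝ => t - B ^ 2 * t ^ 3 / 6)
          (1 - B ^ 2 * (3 * t ^ 2) / 6) t := by
        exact (hasDerivAt_id t).sub (((hasDerivAt_pow 3 t).const_mul (B ^ 2)).div_const 6)
      have h' := this.hasDerivWithinAt (s := Icc 0 T)
      rw [show (1 - B ^ 2 * t ^ 2 / 2 : ℝ) = 1 - B ^ 2 * (3 * t ^ 2) / 6 by ring]
      exact h'
    exact h1'.sub h2
  have hmono : MonotoneOn f (Icc 0 T) := by
    apply monotoneOn_of_deriv_nonneg (convex_Icc (0:ℝ) T)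
    · exact fun t ht => (hfderiv t ht).continuousWithinAt
    · intro t ht
      rw [interior_Icc] at ht
      exact ((hfderiv t (Ioo_subset_Icc_self ht)).hasDerivAt
        (Icc_mem_nhds ht.1 ht.2)).differentiableAt.differentiableWithinAt
    · intro t ht
      rw [interior_Icc] at ht
      have hd := (hfderiv t (Ioo_subset_Icc_self ht)).hasDerivAt (Icc_mem_nhds ht.1 ht.2)
      rw [hd.deriv]
      have := hinner t (Ioo_subset_Icc_self ht)
      linarith
  have hkey : f 0 ≤ f T := hmono h0 hTmem hT
  have hinTv : (T - B ^ 2 * T ^ 3 / 6 : ℝ) ≤ inner ℝ (x T - x 0) v := by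
    have : (inner ℝ (x T - x 0) v : ℝ) = inner ℝ (x T) v - inner ℝ (x 0) v := by
      rw [inner_sub_left]
    simp only [hf] at hkey
    rw [this]
    nlinarith [hkey]
  have hcs : (inner ℝ (x T - x 0) v : ℝ) ≤ ‖x T - x 0‖ := by
    have := real_inner_le_norm (x T - x 0) v
    rw [hunit 0 h0] at this
    simpa using this
  linarith
end

section
/- Let x : [0,L] → ℝ² be a C² unit-speed curve with ‖x″(t)‖ ≤ B for all t, and suppose B²L² < 6. Let r = ‖x(L) − x(0)‖/L (so 0 < r ≤ 1) and define k = √(12(1 − r²))/(L·r). Then k ≤ 2B/(1 − B²L²/6). -/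
open Set

theorem stmt3 (L B : ℝ) (hL : 0 < L) (hB : 0 < B) (hBL : B ^ 2 * L ^ 2 < 6)
    (x x' x'' : ℝ → EuclideanSpace ℝ (Fin 2))
    (hderiv : ∀ t ∈ Icc 0 L, HasDerivWithinAt x (x' t) (Icc 0 L) t)
    (hderiv' : ∀ t ∈ Icc 0 L, HasDerivWithinAt x' (x'' t) (Icc 0 L) t)
    (hcont : ContinuousOn x'' (Icc 0 L))
    (hunit : ∀ t ∈ Icc 0 L, ‖x' t‖ = 1)
    (hbound : ∀ t ∈ Icc 0 L, ‖x'' t‖ ≤ B)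
    (r k : ℝ) (hr : r = ‖x L - x 0‖ / L)
    (hk : k = Real.sqrt (12 * (1 - r ^ 2)) / (L * r)) :
    k ≤ 2 * B / (1 - B ^ 2 * L ^ 2 / 6) := by
  have hconv : Convex ℝ (Icc (0:ℝ) L) := convex_Icc 0 L
  have h0 : (0:ℝ) ∈ Icc (0:ℝ) L := ⟨le_refl 0, hL.le⟩
  have hLmem : L ∈ Icc (0:ℝ) L := ⟨hL.le, le_refl L⟩
  -- velocity variation bound
  have hvel : ∀ t ∈ Icc (0:ℝ) L, ‖x' t - x' 0‖ ≤ B * t := by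
    intro t ht
    have := Convex.norm_image_sub_le_of_norm_hasDerivWithin_le hderiv' hbound hconv h0 ht
    simpa [abs_of_nonneg ht.1] using this
  -- inner product lower bound
  have hinner : ∀ t ∈ Icc (0:ℝ) L,
      1 - B ^ 2 * t ^ 2 / 2 ≤ inner ℝ (x' 0) (x' t) := by
    intro t ht
    have hsq : ‖x' 0 - x' t‖ ^ 2 =
        ‖x' 0‖ ^ 2 - 2 * inner ℝ (x' 0) (x' t) + ‖x' t‖ ^ 2 := by
      rw [@norm_sub_sq_real]
    have h1 : ‖x' 0 - x' t‖ ≤ B * t := by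
      rw [norm_sub_rev]; exact hvel t ht
    have h2 : ‖x' 0 - x' t‖ ^ 2 ≤ (B * t) ^ 2 := by
      have := norm_nonneg (x' 0 - x' t)
      nlinarith
    rw [hunit 0 h0, hunit t ht] at hsq
    nlinarith
  -- the function F
  set f : ℝ → ℝ := fun t => inner ℝ (x' 0) (x t) with hf
  have hfderiv : ∀ t ∈ Icc (0:ℝ) L,
      HasDerivWithinAt f ((inner ℝ (x' 0) (x' t) : ℝ)) (Icc 0 L) t := by
    intro t ht
    have h := (hasDerivWithinAt_const t (Icc (0:ℝ) L) (x' 0)).inner ℝ (hderiv t ht)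
    simp only [inner_zero_left, add_zero] at h
    exact h
  set F : ℝ → ℝ := fun t => f t - t + B ^ 2 * t ^ 3 / 6 with hF
  have hFderiv : ∀ t ∈ Icc (0:ℝ) L,
      HasDerivWithinAt F ((inner ℝ (x' 0) (x' t) : ℝ) - 1 + B ^ 2 * t ^ 2 / 2)
        (Icc 0 L) t := by
    intro t ht
    have h1 : HasDerivWithinAt (fun t : ℝ => B ^ 2 * t ^ 3 / 6)
        (B ^ 2 * t ^ 2 / 2) (Icc 0 L) t := by
      have := ((hasDerivWithinAt_pow 3 t (s := Icc (0:ℝ) L)).const_mul (B ^ 2)).div_const 6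
      refine this.congr_deriv ?_
      rw [show (3:ℕ) - 1 = 2 from rfl]; push_cast; ring
    have := ((hfderiv t ht).sub (hasDerivWithinAt_id t _)).add h1
    exact this
  have hxcont : ContinuousOn x (Icc 0 L) := fun t ht =>
    (hderiv t ht).continuousWithinAt
  have hFcont : ContinuousOn F (Icc 0 L) := by
    apply ContinuousOn.add
    · apply ContinuousOn.sub
      · exact (continuous_const.inner continuous_id).comp_continuousOn hxcont
      · exact continuousOn_id
    · exact (continuous_const.mul ((continuous_pow 3))).continuousOn.div_const 6
  have hmono : MonotoneOn F (Icc 0 L) := by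
    apply monotoneOn_of_hasDerivWithinAt_nonneg hconv hFcont
    · intro t ht
      rw [interior_Icc] at ht ⊢
      exact (hFderiv t (Ioo_subset_Icc_self ht)).mono Ioo_subset_Icc_self
    · intro t ht
      rw [interior_Icc] at ht
      have := hinner t (Ioo_subset_Icc_self ht)
      linarith
  have hFle : F 0 ≤ F L := hmono h0 hLmem (le_of_lt hL)
  have hfdiff : L - B ^ 2 * L ^ 3 / 6 ≤ f L - f 0 := by
    simp only [hF] at hFle
    nlinarith [hFle]
  -- Cauchy-Schwarz
  have hCS : f L - f 0 ≤ ‖x L - x 0‖ := by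
    have h1 : f L - f 0 = inner ℝ (x' 0) (x L - x 0) := by
      simp [hf, inner_sub_right]
    rw [h1]
    calc (inner ℝ (x' 0) (x L - x 0) : ℝ) ≤ ‖x' 0‖ * ‖x L - x 0‖ :=
          real_inner_le_norm _ _
      _ = ‖x L - x 0‖ := by rw [hunit 0 h0, one_mul]
  have hchord : L - B ^ 2 * L ^ 3 / 6 ≤ ‖x L - x 0‖ := le_trans hfdiff hCS
  -- chord upper bound: ‖x L - x 0‖ ≤ L
  have hchordle : ‖x L - x 0‖ ≤ L := by
    have := Convex.norm_image_sub_le_of_norm_hasDerivWithin_le hderiv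
      (fun t ht => (hunit t ht).le) hconv h0 hLmem
    simpa [abs_of_nonneg hL.le] using this
  set c : ℝ := 1 - B ^ 2 * L ^ 2 / 6 with hc
  have hcpos : 0 < c := by simp only [hc]; linarith
  have hrge : c ≤ r := by
    rw [hr, le_div_iff₀ hL]
    simp only [hc]
    nlinarith [hchord]
  have hrle : r ≤ 1 := by
    rw [hr, div_le_one hL]; exact hchordle
  have hrpos : 0 < r := lt_of_lt_of_le hcpos hrge
  -- bound the sqrt
  have hs : Real.sqrt (12 * (1 - r ^ 2)) ≤ 2 * B * L := by
    have h1 : 12 * (1 - r ^ 2) ≤ (2 * B * L) ^ 2 := by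
      have h1r : 1 - r ≤ B ^ 2 * L ^ 2 / 6 := by simp only [hc] at hrge; linarith
      nlinarith
    calc Real.sqrt (12 * (1 - r ^ 2)) ≤ Real.sqrt ((2 * B * L) ^ 2) :=
          Real.sqrt_le_sqrt h1
      _ = 2 * B * L := Real.sqrt_sq (by positivity)
  rw [hk]
  have hLr : 0 < L * r := mul_pos hL hrpos
  calc Real.sqrt (12 * (1 - r ^ 2)) / (L * r) ≤ (2 * B * L) / (L * r) := by
        gcongr
    _ = 2 * B / r := by field_simp
    _ ≤ 2 * B / c := by
        gcongr
end

section
/- With the same data and definitions as in the n = 2 formulas of Section 5, additionally set â₁ = (12(2L₁ω₁ + 3L₂ω₁ + L₁ω₂) − 5L₁(4ρ₁L₁ + 3ρ₁L₂ + ρ₂L₂))/(36(L₁ + L₂)) and â₂ = (12(L₁ω₂ + L₂ω₁) + 5L₁L₂(ρ₁ − ρ₂))/(12(L₁ + L₂)). Then â₂ = â₁ + b̂₁L₁ + ĉ₁L₁² + d̂₁L₁³, i.e. the estimated spline is continuous at the interior knot. -/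
theorem stmt10 (L₁ L₂ ω₁ ω₂ ρ₁ ρ₂ a₁ a₂ b₁ c₁ d₁ : ℝ)
    (hL₁ : 0 < L₁) (hL₂ : 0 < L₂)
    (ha₁ : a₁ = (12 * (2 * L₁ * ω₁ + 3 * L₂ * ω₁ + L₁ * ω₂)
        - 5 * L₁ * (4 * ρ₁ * L₁ + 3 * ρ₁ * L₂ + ρ₂ * L₂)) / (36 * (L₁ + L₂)))
    (ha₂ : a₂ = (12 * (L₁ * ω₂ + L₂ * ω₁) + 5 * L₁ * L₂ * (ρ₁ - ρ₂)) / (12 * (L₁ + L₂)))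
    (hb₁ : b₁ = 0)
    (hc₁ : c₁ = (12 * (ω₁ - ω₂) + 5 * (2 * ρ₁ * L₁ + ρ₁ * L₂ + ρ₂ * L₂)) / (2 * L₁ * (L₁ + L₂)))
    (hd₁ : d₁ = (60 * (ω₂ - ω₁) - 5 * (8 * ρ₁ * L₁ + 3 * ρ₁ * L₂ + 5 * ρ₂ * L₂)) / (9 * L₁ ^ 2 * (L₁ + L₂))) :
    a₂ = a₁ + b₁ * L₁ + c₁ * L₁ ^ 2 + d₁ * L₁ ^ 3 := by
  subst ha₁ ha₂ hb₁ hc₁ hd₁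
  have hL₁_ne : L₁ ≠ 0 := hL₁.ne'
  have hsum_ne : L₁ + L₂ ≠ 0 := (add_pos hL₁ hL₂).ne'
  field_simp
  ring
end
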